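/- arXiv:1912.07120 — 2 statements merged into one kernel-verified Lean document; each statement's English description precedes it below -/
import Mathlib

section
/- Let (Ω, ℱ, μ) be a standard Borel probability space, 𝓗 ⊆ ℱ a sub-σ-algebra, X and e real-valued random variables on Ω, and M1L, M1U, M2L, M2U real-valued 𝓗-measurable random variables. Let α₁, α₂, π₁, π₂ ∈ [0,1]. Suppose μ{ω : μ({ω' : M1L(ω') ≤ X(ω') ≤ M1U(ω')} | 𝓗)(ω) ≥ 1 − α₁} ≥ 1 − π₁ and μ{ω : μ({ω' : M2L(ω') ≤ e(ω') ≤ M2U(ω')} | 𝓗)(ω) ≥ 1 − α₂} ≥ 1 − π₂. Then μ{ω : μ({ω' : M1L(ω') + M2L(ω') ≤ X(ω') + e(ω') ≤ M1U(ω') + M2U(ω')} | 𝓗)(ω) ≥ 1 − α₁ − α₂} ≥ 1 − π₁ − π₂. -/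
open MeasureTheory ProbabilityTheory

/-! Two events of probability at least `1 - a` and `1 - b` meet with probability at least
`1 - a - b` (Bonferroni). Applied under each conditional law `condExpKernel μ m ω` it combines the
two coverage bounds, and applied once more under `μ` it combines the two confidence bounds. -/

lemma ofReal_one_sub_sub_le_measure_inter {α : Type*} {mα : MeasurableSpace α} {μ : Measure α}
    [IsZeroOrProbabilityMeasure μ] {s t : Set α} (ht : NullMeasurableSet t μ) {a b : ℝ}
    (hs_ge : ENNReal.ofReal (1 - a) ≤ μ s) (ht_ge : ENNReal.ofReal (1 - b) ≤ μ t) :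
    ENNReal.ofReal (1 - a - b) ≤ μ (s ∩ t) := by
  rw [ENNReal.ofReal_le_iff_le_toReal (measure_ne_top μ _), ← measureReal_def] at hs_ge ht_ge ⊢
  have h_union : μ.real (s ∪ t) + μ.real (s ∩ t) = μ.real s + μ.real t :=
    measureReal_union_add_inter₀ ht
  have h_le_one : μ.real (s ∪ t) ≤ 1 := measureReal_le_one
  linarith

theorem prediction_interval_conditional_general
    {Ω : Type*} {m mΩ : MeasurableSpace Ω} [StandardBorelSpace Ω]
    (hm : m ≤ mΩ) (μ : Measure Ω) [IsProbabilityMeasure μ]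
    (X e M1L M1U M2L M2U : Ω → ℝ)
    (he : Measurable e)
    (hM2L : Measurable[m] M2L) (hM2U : Measurable[m] M2U)
    (α₁ α₂ π₁ π₂ : ℝ)
    (h1 : ENNReal.ofReal (1 - π₁) ≤
      μ {ω | ENNReal.ofReal (1 - α₁) ≤
        condExpKernel μ m ω {ω' | M1L ω' ≤ X ω' ∧ X ω' ≤ M1U ω'}})
    (h2 : ENNReal.ofReal (1 - π₂) ≤
      μ {ω | ENNReal.ofReal (1 - α₂) ≤
        condExpKernel μ m ω {ω' | M2L ω' ≤ e ω' ∧ e ω' ≤ M2U ω'}}) :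
    ENNReal.ofReal (1 - π₁ - π₂) ≤
      μ {ω | ENNReal.ofReal (1 - α₁ - α₂) ≤
        condExpKernel μ m ω
          {ω' | M1L ω' + M2L ω' ≤ X ω' + e ω' ∧ X ω' + e ω' ≤ M1U ω' + M2U ω'}} := by
  set B := {ω' | M2L ω' ≤ e ω' ∧ e ω' ≤ M2U ω'}
  have hB : MeasurableSet B :=
    (measurableSet_le (hM2L.mono hm le_rfl) he).inter (measurableSet_le he (hM2U.mono hm le_rfl))
  have hT : MeasurableSet {ω | ENNReal.ofReal (1 - α₂) ≤ condExpKernel μ m ω B} :=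
    measurableSet_le measurable_const ((measurable_condExpKernel hB).mono hm le_rfl)
  refine (ofReal_one_sub_sub_le_measure_inter hT.nullMeasurableSet h1 h2).trans
    (measure_mono fun ω ⟨hωA, hωB⟩ => ?_)
  refine (ofReal_one_sub_sub_le_measure_inter hB.nullMeasurableSet hωA hωB).trans
    (measure_mono ?_)
  rintro ω' ⟨⟨hX_ge, hX_le⟩, he_ge, he_le⟩
  exact ⟨add_le_add hX_ge he_ge, add_le_add hX_le he_le⟩

/-- Lemma 1 (Prediction Interval) of the paper: on a standard Borel probability space with
sub-σ-algebra `m`, if the `m`-conditional probability that `M1L ≤ X ≤ M1U` is at least `1 - α₁`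
with μ-probability at least `1 - π₁`, and the `m`-conditional probability that `M2L ≤ e ≤ M2U`
is at least `1 - α₂` with μ-probability at least `1 - π₂`, then the `m`-conditional probability
that `M1L + M2L ≤ X + e ≤ M1U + M2U` is at least `1 - α₁ - α₂` with μ-probability at least
`1 - π₁ - π₂`. -/
theorem prediction_interval_conditional
    {Ω : Type*} {m mΩ : MeasurableSpace Ω} [StandardBorelSpace Ω]
    (hm : m ≤ mΩ) (μ : Measure Ω) [IsProbabilityMeasure μ]
    (X e M1L M1U M2L M2U : Ω → ℝ)
    (hX : Measurable X) (he : Measurable e)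
    (hM1L : Measurable[m] M1L) (hM1U : Measurable[m] M1U)
    (hM2L : Measurable[m] M2L) (hM2U : Measurable[m] M2U)
    (α₁ α₂ π₁ π₂ : ℝ)
    (hα₁ : α₁ ∈ Set.Icc (0:ℝ) 1) (hα₂ : α₂ ∈ Set.Icc (0:ℝ) 1)
    (hπ₁ : π₁ ∈ Set.Icc (0:ℝ) 1) (hπ₂ : π₂ ∈ Set.Icc (0:ℝ) 1)
    (h1 : ENNReal.ofReal (1 - π₁) ≤
      μ {ω | ENNReal.ofReal (1 - α₁) ≤
        condExpKernel μ m ω {ω' | M1L ω' ≤ X ω' ∧ X ω' ≤ M1U ω'}})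
    (h2 : ENNReal.ofReal (1 - π₂) ≤
      μ {ω | ENNReal.ofReal (1 - α₂) ≤
        condExpKernel μ m ω {ω' | M2L ω' ≤ e ω' ∧ e ω' ≤ M2U ω'}}) :
    ENNReal.ofReal (1 - π₁ - π₂) ≤
      μ {ω | ENNReal.ofReal (1 - α₁ - α₂) ≤
        condExpKernel μ m ω
          {ω' | M1L ω' + M2L ω' ≤ X ω' + e ω' ∧ X ω' + e ω' ≤ M1U ω' + M2U ω'}} :=
  prediction_interval_conditional_general hm μ X e M1L M1U M2L M2U he hM2L hM2U α₁ α₂ π₁ π₂ h1 h2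
end

section
/- Given a set Δ ⊆ ℝ^d, a symmetric d × d real matrix Q, and ξ ∈ ℝ^d, define M_ξ = {δ ∈ Δ : δᵀQδ − 2ξᵀδ ≤ 0}. Then for every c ∈ ℝ^d and every κ ∈ ℝ, the sets {ξ ∈ ℝ^d : cᵀδ ≥ κ for all δ ∈ M_ξ} and {ξ ∈ ℝ^d : cᵀδ ≤ κ for all δ ∈ M_ξ} are convex subsets of ℝ^d. -/
open Matrix

/-! For fixed `δ` the condition `δ ∈ M_ξ` is an affine constraint on `ξ`, so
`{ξ | ∀ δ ∈ M_ξ, P δ}` is the intersection, over the `δ ∈ Δ` failing `P`, of the open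
half-spaces `{ξ | 2 ξᵀδ < δᵀQδ}`. -/

theorem convex_setOf_forall_imp_of_le_linear {𝕜 E ι : Type*} [Field 𝕜] [LinearOrder 𝕜]
    [IsStrictOrderedRing 𝕜] [AddCommGroup E] [Module 𝕜 E] (s : Set ι) (f : ι → E →ₗ[𝕜] 𝕜)
    (r : ι → 𝕜) (P : ι → Prop) :
    Convex 𝕜 {x | ∀ i ∈ s, r i ≤ f i x → P i} := by
  have hEq : {x | ∀ i ∈ s, r i ≤ f i x → P i} = ⋂ i ∈ {i ∈ s | ¬P i}, {x | f i x < r i} := by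
    ext x
    simp only [Set.mem_ofPred_eq, Set.mem_iInter, and_imp]
    exact forall₂_congr fun i _ => by rw [← not_le]; tauto
  rw [hEq]
  exact convex_iInter₂ fun i _ => convex_halfSpace_lt (f i).isLinear (r i)

theorem convex_setOf_forall_mem_localization {𝕜 n : Type*} [Field 𝕜] [LinearOrder 𝕜]
    [IsStrictOrderedRing 𝕜] [Fintype n] (Δ : Set (n → 𝕜)) (q : (n → 𝕜) → 𝕜)
    (P : (n → 𝕜) → Prop) :
    Convex 𝕜 {ξ : n → 𝕜 | ∀ δ ∈ {δ ∈ Δ | q δ - 2 * (ξ ⬝ᵥ δ) ≤ 0}, P δ} := by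
  have hEq : {ξ : n → 𝕜 | ∀ δ ∈ {δ ∈ Δ | q δ - 2 * (ξ ⬝ᵥ δ) ≤ 0}, P δ} =
      {ξ | ∀ δ ∈ Δ, q δ ≤ ((2 : 𝕜) • (dotProductBilin 𝕜 𝕜).flip δ) ξ → P δ} := by
    ext ξ
    simp
  rw [hEq]
  exact convex_setOf_forall_imp_of_le_linear Δ _ q P

theorem localization_level_sets_convex_general
    {d : ℕ} (Δ : Set (Fin d → ℝ)) (Q : Matrix (Fin d) (Fin d) ℝ)
    (c : Fin d → ℝ) (κ : ℝ) :
    Convex ℝ {ξ : Fin d → ℝ |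
        ∀ δ ∈ {δ ∈ Δ | δ ⬝ᵥ (Q *ᵥ δ) - 2 * (ξ ⬝ᵥ δ) ≤ 0}, κ ≤ c ⬝ᵥ δ} ∧
      Convex ℝ {ξ : Fin d → ℝ |
        ∀ δ ∈ {δ ∈ Δ | δ ⬝ᵥ (Q *ᵥ δ) - 2 * (ξ ⬝ᵥ δ) ≤ 0}, c ⬝ᵥ δ ≤ κ} :=
  ⟨convex_setOf_forall_mem_localization Δ _ _, convex_setOf_forall_mem_localization Δ _ _⟩

/-- Second conclusion of Lemma 2 (Optimization Bounds): with
`M_ξ = {δ ∈ Δ : δᵀQδ − 2ξᵀδ ≤ 0}`, for every `c` and `κ` the sets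
`{ξ : cᵀδ ≥ κ for all δ ∈ M_ξ}` and `{ξ : cᵀδ ≤ κ for all δ ∈ M_ξ}` are convex. -/
theorem localization_level_sets_convex
    {d : ℕ} (Δ : Set (Fin d → ℝ)) (Q : Matrix (Fin d) (Fin d) ℝ) (hQ : Q.IsSymm)
    (c : Fin d → ℝ) (κ : ℝ) :
    Convex ℝ {ξ : Fin d → ℝ |
        ∀ δ ∈ {δ ∈ Δ | δ ⬝ᵥ (Q *ᵥ δ) - 2 * (ξ ⬝ᵥ δ) ≤ 0}, κ ≤ c ⬝ᵥ δ} ∧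
      Convex ℝ {ξ : Fin d → ℝ |
        ∀ δ ∈ {δ ∈ Δ | δ ⬝ᵥ (Q *ᵥ δ) - 2 * (ξ ⬝ᵥ δ) ≤ 0}, c ⬝ᵥ δ ≤ κ} :=
  localization_level_sets_convex_general Δ Q c κ
end
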